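/- Let (Ω, 𝓕, ℙ) be a probability space and let S : Ω → Matrix(n,n,ℝ) be a random matrix that is almost surely symmetric and positive definite, with entrywise expectation E[S] = I (the identity matrix) and with S⁻¹ entrywise integrable. Then the matrix E[S⁻¹] − I is positive semidefinite. -/

import Mathlib

/-!
For a positive definite `A`, `A⁻¹ + A - 2 = (A - 1)ᴴ A⁻¹ (A - 1)` is positive semidefinite, i.e.
`A⁻¹ ≥ 2 - A` in the Loewner order. Apply this to `S ω` and take expectations entrywise: positive
semidefiniteness survives integration (test against a fixed vector), and `E[S] = 1` turns the
right-hand side into `1`.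
-/

open Matrix MeasureTheory

namespace Matrix

variable {𝕜 ι : Type*} [RCLike 𝕜] [Fintype ι] [DecidableEq ι]

open scoped ComplexOrder in
lemma PosDef.posSemidef_inv_add_sub_two_smul_one {A : Matrix ι ι 𝕜} (hA : A.PosDef) :
    (A⁻¹ + A - (2 : 𝕜) • 1).PosSemidef := by
  have hdet : IsUnit A.det := hA.isUnit.map detMonoidHom
  convert hA.inv.posSemidef.conjTranspose_mul_mul_same (A - 1) using 1
  simp only [conjTranspose_sub, hA.isHermitian.eq, conjTranspose_one, sub_mul, mul_sub,
    mul_nonsing_inv _ hdet, nonsing_inv_mul _ hdet, Matrix.one_mul, Matrix.mul_one, two_smul]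
  abel

end Matrix

section EntrywiseIntegral

variable {Ω ι κ : Type*} [MeasurableSpace Ω] {μ : Measure Ω}

noncomputable def entrywiseIntegral (μ : Measure Ω) (M : Ω → Matrix ι κ ℝ) : Matrix ι κ ℝ :=
  of fun i j => ∫ ω, M ω i j ∂μ

variable {M N : Ω → Matrix ι κ ℝ}

lemma entrywiseIntegral_add (hM : ∀ i j, Integrable (fun ω => M ω i j) μ)
    (hN : ∀ i j, Integrable (fun ω => N ω i j) μ) :
    entrywiseIntegral μ (M + N) = entrywiseIntegral μ M + entrywiseIntegral μ N := by
  ext i j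
  exact integral_add (hM i j) (hN i j)

lemma entrywiseIntegral_sub (hM : ∀ i j, Integrable (fun ω => M ω i j) μ)
    (hN : ∀ i j, Integrable (fun ω => N ω i j) μ) :
    entrywiseIntegral μ (M - N) = entrywiseIntegral μ M - entrywiseIntegral μ N := by
  ext i j
  exact integral_sub (hM i j) (hN i j)

lemma entrywiseIntegral_const [IsProbabilityMeasure μ] (A : Matrix ι κ ℝ) :
    entrywiseIntegral μ (fun _ => A) = A := by
  ext i j
  simp [entrywiseIntegral]

variable [Fintype ι]

lemma dotProduct_entrywiseIntegral_mulVec {M : Ω → Matrix ι ι ℝ}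
    (hM : ∀ i j, Integrable (fun ω => M ω i j) μ) (x : ι → ℝ) :
    x ⬝ᵥ (entrywiseIntegral μ M *ᵥ x) = ∫ ω, x ⬝ᵥ (M ω *ᵥ x) ∂μ := by
  have hterm : ∀ i j, Integrable (fun ω => x i * (M ω i j * x j)) μ :=
    fun i j => ((hM i j).mul_const (x j)).const_mul (x i)
  simp only [dotProduct, mulVec, Finset.mul_sum, entrywiseIntegral, of_apply]
  rw [integral_finsetSum _ fun i _ => integrable_finsetSum _ fun j _ => hterm i j]
  refine Finset.sum_congr rfl fun i _ => ?_
  rw [integral_finsetSum _ fun j _ => hterm i j]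
  refine Finset.sum_congr rfl fun j _ => ?_
  rw [integral_const_mul, integral_mul_const]

lemma posSemidef_entrywiseIntegral {M : Ω → Matrix ι ι ℝ} (hM : ∀ᵐ ω ∂μ, (M ω).PosSemidef)
    (hMint : ∀ i j, Integrable (fun ω => M ω i j) μ) :
    (entrywiseIntegral μ M).PosSemidef := by
  refine .of_dotProduct_mulVec_nonneg (IsHermitian.ext fun i j => ?_) fun x => ?_
  · refine integral_congr_ae ?_
    filter_upwards [hM] with ω hω
    simpa using hω.isHermitian.apply i j
  · rw [star_trivial, dotProduct_entrywiseIntegral_mulVec hMint]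
    refine integral_nonneg_of_ae ?_
    filter_upwards [hM] with ω hω
    simpa using hω.dotProduct_mulVec_nonneg x

end EntrywiseIntegral

/-- **Matrix Jensen-type inequality (special case of Lemma 2 of the paper).**
If `S` is an almost surely symmetric positive definite random matrix with entrywise
expectation `E[S] = I` and entrywise integrable inverse, then `E[S⁻¹] − I` is
positive semidefinite. -/
theorem expected_inverse_sub_id_posSemidef
    {Ω : Type*} [MeasurableSpace Ω] (ℙ : Measure Ω) [IsProbabilityMeasure ℙ]
    {n : ℕ}
    (S : Ω → Matrix (Fin n) (Fin n) ℝ)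
    (hSpd : ∀ᵐ ω ∂ℙ, (S ω).PosDef)
    (hSmean : (Matrix.of fun i j => ∫ ω, S ω i j ∂ℙ) = 1)
    (hSint : ∀ i j, Integrable (fun ω => S ω i j) ℙ)
    (hSinvint : ∀ i j, Integrable (fun ω => (S ω)⁻¹ i j) ℙ) :
    ((Matrix.of fun i j => ∫ ω, (S ω)⁻¹ i j ∂ℙ) - 1).PosSemidef := by
  have hmean : entrywiseIntegral ℙ ((fun ω => (S ω)⁻¹) + S - fun _ => (2 : ℝ) • 1)
      = entrywiseIntegral ℙ (fun ω => (S ω)⁻¹) - 1 := by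
    rw [entrywiseIntegral_sub (M := (fun ω => (S ω)⁻¹) + S) (N := fun _ => (2 : ℝ) • 1)
      (fun i j => (hSinvint i j).add (hSint i j)) (fun _ _ => integrable_const _),
      entrywiseIntegral_add hSinvint hSint, entrywiseIntegral_const,
      show entrywiseIntegral ℙ S = 1 from hSmean, two_smul]
    abel
  rw [← entrywiseIntegral, ← hmean]
  exact posSemidef_entrywiseIntegral
    (hSpd.mono fun ω hω => hω.posSemidef_inv_add_sub_two_smul_one)
    fun i j => ((hSinvint i j).add (hSint i j)).sub (integrable_const _)
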